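/- Define J₀ : ℝ → ℝ by J₀(x) = ∫₀¹ cos(x·cos(2πs)) ds. Let φ : ℝ² → ℝ³ be an injective linear map, ℓ : ℝ² → ℝ a nonzero linear form, u ∈ ℝ² with ℓ(u) = 1, and w ∈ ker ℓ with w ≠ 0, such that ⟨φ(u), φ(w)⟩ = 0; set t = φ(u)/‖φ(u)‖ and n = (φ(u) × φ(w))/(‖φ(u)‖·‖φ(w)‖). Let η ≥ 0 and r = √(η + ‖φ(u)‖²). Suppose α ∈ [0, 2.4] satisfies r·J₀(α) = ‖φ(u)‖, and let θ ∈ [−α, α]. Then ‖r·(cos θ · t + sin θ · n) − φ(u)‖² ≤ 7η. -/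

import Mathlib

open scoped RealInnerProductSpace

noncomputable section

abbrev E2 := EuclideanSpace ℝ (Fin 2)
abbrev E3 := EuclideanSpace ℝ (Fin 3)

/-- The cross product of two vectors of Euclidean `ℝ³`. -/
noncomputable def cross (a b : E3) : E3 :=
  (WithLp.equiv 2 (Fin 3 → ℝ)).symm
    ![a 1 * b 2 - a 2 * b 1, a 2 * b 0 - a 0 * b 2, a 0 * b 1 - a 1 * b 0]

/-- The Bessel function of the first kind of order `0`. -/
noncomputable def J0 (x : ℝ) : ℝ :=
  ∫ s in (0:ℝ)..1, Real.cos (x * Real.cos (2 * Real.pi * s))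

/-!
Write `P = ‖φ(u)‖`, so that `φ(u) = P t` with `t` a unit vector, and `n ⊥ t` with `‖n‖ ≤ 1`.
Then the squared displacement is at most `r² - 2 r P cos θ + P²`, while `η = r² - P²` and
`P = r j` with `j = J₀(α)`; the claim reduces to `4 j² - j cos θ ≤ 3`. This follows from
`cos θ ≥ 1 - α²/2` and from `j ≤ 1 - α²/4 + α⁴/48`, obtained by integrating the quartic Taylor
bound `cos y ≤ 1 - y²/2 + y⁴/24`; the restriction `α ≤ 2.4` makes the resulting polynomial
inequality hold.
-/

namespace Real

theorem cos_le_one_sub_sq_div_two_add_pow_four_div (x : ℝ) :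
    cos x ≤ 1 - x ^ 2 / 2 + x ^ 4 / 24 := by
  wlog hx : 0 ≤ x generalizing x
  · simpa [Even.neg_pow (by decide : Even 4)] using this (-x) (by linarith)
  let f (t : ℝ) : ℝ := 1 - t ^ 2 / 2 + t ^ 4 / 24 - cos t
  have hderiv (t : ℝ) : deriv f t = sin t - (t - t ^ 3 / 6) := by
    simp (disch := fun_prop) only [f, deriv_fun_sub, deriv_fun_add, deriv_const',
      deriv_div_const, deriv_fun_pow, deriv_id'', deriv_cos']
    ring
  have hmono : MonotoneOn f (Set.Ici 0) := by
    apply monotoneOn_of_deriv_nonneg (convex_Ici 0) (by fun_prop) (by fun_prop)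
    intro t ht
    rw [interior_Ici] at ht
    simpa [hderiv] using sin_ge_sub_cube ht.le
  simpa [f] using hmono Set.self_mem_Ici hx hx

theorem integral_cos_two_pi_mul_sq :
    ∫ s in (0:ℝ)..1, cos (2 * π * s) ^ 2 = 1 / 2 := by
  rw [intervalIntegral.integral_comp_mul_left (fun x => cos x ^ 2) (by positivity),
    integral_cos_sq]
  simp only [mul_one, mul_zero, sin_two_pi, sin_zero, smul_eq_mul, sub_zero, zero_add]
  field_simp

end Real

open Real in
theorem J0_le (α : ℝ) : J0 α ≤ 1 - α ^ 2 / 4 + α ^ 4 / 48 := by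
  set K := α ^ 2 / 2 - α ^ 4 / 24
  have hpointwise (s : ℝ) : cos (α * cos (2 * π * s)) ≤ 1 - K * cos (2 * π * s) ^ 2 := by
    set c := cos (2 * π * s)
    have hc : c ^ 4 ≤ c ^ 2 := by nlinarith [sq_nonneg c, cos_sq_le_one (2 * π * s)]
    calc cos (α * c) ≤ 1 - (α * c) ^ 2 / 2 + (α * c) ^ 4 / 24 :=
          cos_le_one_sub_sq_div_two_add_pow_four_div _
      _ ≤ 1 - (α * c) ^ 2 / 2 + α ^ 4 * c ^ 2 / 24 := by
          rw [mul_pow α c 4]; gcongr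
      _ = 1 - K * c ^ 2 := by ring
  calc J0 α ≤ ∫ s in (0:ℝ)..1, (1 - K * cos (2 * π * s) ^ 2) :=
        intervalIntegral.integral_mono_on zero_le_one
          (Continuous.intervalIntegrable (by fun_prop) _ _)
          (Continuous.intervalIntegrable (by fun_prop) _ _) fun s _ => hpointwise s
    _ = 1 - α ^ 2 / 4 + α ^ 4 / 48 := by
        rw [intervalIntegral.integral_sub intervalIntegrable_const
          (Continuous.intervalIntegrable (by fun_prop) _ _),
          intervalIntegral.integral_const_mul, integral_cos_two_pi_mul_sq]
        simp only [intervalIntegral.integral_const, K]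
        ring

theorem four_mul_sq_sub_mul_le_three {j c x : ℝ} (hj₀ : 0 ≤ j) (hj : j ≤ 1 - x + x ^ 2 / 3)
    (hc : 1 - 2 * x ≤ c) (hx₀ : 0 ≤ x) (hx : x ≤ 1.44) : 4 * j ^ 2 - j * c ≤ 3 := by
  have hendpoint : 4 * (1 - x + x ^ 2 / 3) ^ 2 - (1 - x + x ^ 2 / 3) * (1 - 2 * x) ≤ 3 := by
    have : -5 + 13 * x / 3 - 2 * x ^ 2 + 4 * x ^ 3 / 9 ≤ 0 := by
      nlinarith [mul_nonneg (sq_nonneg x) (sub_nonneg.2 hx), sq_nonneg (x - 13 / 8)]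
    nlinarith [mul_nonpos_of_nonneg_of_nonpos hx₀ this]
  -- `j ↦ 4 j² - j (1 - 2x)` is convex and vanishes at `0`, so on `[0, 1 - x + x²/3]` it is
  -- bounded by its value at the right endpoint.
  have hconvex : 0 ≤ (1 - x + x ^ 2 / 3 - j) * (4 * (1 - x + x ^ 2 / 3 + j) - (1 - 2 * x)) :=
    mul_nonneg (by linarith) (by nlinarith [sq_nonneg (2 * x - 3)])
  nlinarith [mul_le_mul_of_nonneg_left hc hj₀]

theorem norm_smul_cos_add_sin_sub_smul_sq_le {F : Type*} [NormedAddCommGroup F]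
    [InnerProductSpace ℝ F] {t n : F} (ht : ‖t‖ = 1) (hn : ‖n‖ ≤ 1) (htn : ⟪t, n⟫ = 0)
    (r θ p : ℝ) :
    ‖r • (Real.cos θ • t + Real.sin θ • n) - p • t‖ ^ 2
      ≤ r ^ 2 - 2 * r * Real.cos θ * p + p ^ 2 := by
  have hsplit : r • (Real.cos θ • t + Real.sin θ • n) - p • t
      = (r * Real.cos θ - p) • t + (r * Real.sin θ) • n := by
    simp only [smul_add, smul_smul, sub_smul]
    abel
  have hn2 : ‖n‖ ^ 2 ≤ 1 := pow_le_one₀ (norm_nonneg n) hn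
  rw [hsplit, norm_add_sq_real, real_inner_smul_left, real_inner_smul_right, htn,
    norm_smul, norm_smul, mul_pow, mul_pow, ht, Real.norm_eq_abs, Real.norm_eq_abs, sq_abs,
    sq_abs]
  nlinarith [Real.cos_sq_add_sin_sq θ, mul_le_mul_of_nonneg_left hn2 (sq_nonneg (r * Real.sin θ))]

theorem inner_self_cross (a b : E3) : ⟪a, cross a b⟫ = 0 := by
  simp only [cross, WithLp.equiv_symm_apply, PiLp.inner_apply, RCLike.inner_apply,
    Real.ringHom_apply, Fin.sum_univ_three, Matrix.cons_val]
  ring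

theorem norm_cross_sq (a b : E3) : ‖cross a b‖ ^ 2 = ‖a‖ ^ 2 * ‖b‖ ^ 2 - ⟪a, b⟫ ^ 2 := by
  simp only [cross, WithLp.equiv_symm_apply, EuclideanSpace.norm_sq_eq, PiLp.inner_apply,
    RCLike.inner_apply, Real.ringHom_apply, Real.norm_eq_abs, sq_abs, Fin.sum_univ_three,
    Matrix.cons_val]
  ring

theorem norm_cross_le (a b : E3) : ‖cross a b‖ ≤ ‖a‖ * ‖b‖ :=
  (sq_le_sq₀ (norm_nonneg _) (by positivity)).1 <| by
    rw [norm_cross_sq, mul_pow]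
    nlinarith [sq_nonneg ⟪a, b⟫]

theorem norm_inv_smul_cross_le_one (a b : E3) : ‖(‖a‖ * ‖b‖)⁻¹ • cross a b‖ ≤ 1 := by
  rw [norm_smul, norm_inv, norm_mul, norm_norm, norm_norm]
  exact inv_mul_le_one_of_le₀ (norm_cross_le a b) (by positivity)

theorem stmt8_general (φ : E2 →ₗ[ℝ] E3)
    (u : E2)
    (w : E2)
    (t n : E3)
    (ht : t = ‖φ u‖⁻¹ • φ u)
    (hn : n = (‖φ u‖ * ‖φ w‖)⁻¹ • cross (φ u) (φ w))
    (η : ℝ) (hη : 0 ≤ η)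
    (r : ℝ) (hr : r = Real.sqrt (η + ‖φ u‖ ^ 2))
    (α : ℝ) (hα1 : α ≤ 2.4)
    (hJ : r * J0 α = ‖φ u‖)
    (θ : ℝ) (hθ1 : -α ≤ θ) (hθ2 : θ ≤ α) :
    ‖r • (Real.cos θ • t + Real.sin θ • n) - φ u‖ ^ 2 ≤ 7 * η := by
  rcases eq_or_ne (φ u) 0 with hv | hv
  · simp [ht, hn, hv, hη]
  have hP : 0 < ‖φ u‖ := norm_pos_iff.2 hv
  have hr2 : r ^ 2 = η + ‖φ u‖ ^ 2 := by rw [hr, Real.sq_sqrt (by positivity)]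
  have hj : 0 < J0 α := pos_of_mul_pos_right (hJ ▸ hP) (hr ▸ Real.sqrt_nonneg _)
  have hcos : 1 - 2 * (α ^ 2 / 4) ≤ Real.cos θ := by
    nlinarith [Real.one_sub_sq_div_two_le_cos (x := θ), sq_le_sq' hθ1 hθ2]
  have hcore : 4 * J0 α ^ 2 - J0 α * Real.cos θ ≤ 3 :=
    four_mul_sq_sub_mul_le_three hj.le ((J0_le α).trans_eq (by ring)) hcos (by positivity)
      (by nlinarith)
  calc ‖r • (Real.cos θ • t + Real.sin θ • n) - φ u‖ ^ 2
      = ‖r • (Real.cos θ • t + Real.sin θ • n) - ‖φ u‖ • t‖ ^ 2 := by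
        rw [ht, smul_inv_smul₀ hP.ne']
    _ ≤ r ^ 2 - 2 * r * Real.cos θ * ‖φ u‖ + ‖φ u‖ ^ 2 :=
        norm_smul_cos_add_sin_sub_smul_sq_le (ht ▸ norm_smul_inv_norm hv)
          (hn ▸ norm_inv_smul_cross_le_one _ _)
          (by rw [ht, hn, real_inner_smul_left, real_inner_smul_right, inner_self_cross,
            mul_zero, mul_zero]) r θ ‖φ u‖
    _ ≤ 7 * η := by
        rw [← hJ] at hr2 ⊢
        nlinarith [mul_nonneg (sq_nonneg r) (sub_nonneg.2 hcore)]

/-- The square of the displacement of `φ(u)` under a corrugation of amplitude `α`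
is at most `7η`. -/
theorem stmt8 (φ : E2 →ₗ[ℝ] E3) (hφ : Function.Injective φ)
    (ℓ : E2 →ₗ[ℝ] ℝ) (hℓ : ℓ ≠ 0)
    (u : E2) (hu : ℓ u = 1)
    (w : E2) (hw : ℓ w = 0) (hw0 : w ≠ 0)
    (horth : ⟪φ u, φ w⟫ = 0)
    (t n : E3)
    (ht : t = ‖φ u‖⁻¹ • φ u)
    (hn : n = (‖φ u‖ * ‖φ w‖)⁻¹ • cross (φ u) (φ w))
    (η : ℝ) (hη : 0 ≤ η)
    (r : ℝ) (hr : r = Real.sqrt (η + ‖φ u‖ ^ 2))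
    (α : ℝ) (hα0 : 0 ≤ α) (hα1 : α ≤ 2.4)
    (hJ : r * J0 α = ‖φ u‖)
    (θ : ℝ) (hθ1 : -α ≤ θ) (hθ2 : θ ≤ α) :
    ‖r • (Real.cos θ • t + Real.sin θ • n) - φ u‖ ^ 2 ≤ 7 * η :=
  stmt8_general φ u w t n ht hn η hη r hr α hα1 hJ θ hθ1 hθ2

end
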